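/- arXiv:math/0606514 — 3 statements merged into one kernel-verified Lean document; each statement's English description precedes it below -/
import Mathlib

section
/- Let G = (V,E) be a finite simple graph on n vertices with adjacency matrix A and let λ₁ denote the largest eigenvalue of A. Let β ∈ [0,1] satisfy βλ₁ < 1, and let I ⊆ V be a nonempty set of initially infected vertices, |X(0)| = |I|. Then the expected total number of nodes ever infected (and removed) in the Reed-Frost epidemic satisfies E[|Y(∞)|] ≤ √(n·|X(0)|) / (1 − βλ₁). -/
/-!
In the percolation picture a vertex `v` is removed only if some path of `G` from `I` to `v` has
all its edges retained, which for a path with `k` edges happens with probability `β ^ k`. The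
union bound over paths, with paths counted among walks, gives
`E[|Y(∞)|] ≤ ∑_{k < n} β ^ k 𝟙_Iᵀ A ^ k 𝟙`. As `A` is entrywise nonnegative,
`|x ⬝ᵥ A x| ≤ |x| ⬝ᵥ A |x|` bounds every eigenvalue in absolute value by `λ₁`, so the `ℓ²`
operator norm of `A ^ k` is at most `λ₁ ^ k` and `𝟙_Iᵀ A ^ k 𝟙 ≤ λ₁ ^ k √|I| √n`; summing the
geometric series finishes the proof.
-/

open Finset

namespace VirusSpread

variable {V : Type*} [Fintype V] [DecidableEq V]

/-- Bernoulli bond percolation on `G`: the subgraph of `G` consisting of the retained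
edge set `H`. -/
def percSubgraph (G : SimpleGraph V) (H : Finset (Sym2 V)) : SimpleGraph V where
  Adj u v := G.Adj u v ∧ s(u, v) ∈ H
  symm := ⟨fun u v h => ⟨h.1.symm, by rw [Sym2.eq_swap]; exact h.2⟩⟩
  loopless := ⟨fun u h => G.loopless.irrefl u h.1⟩

open scoped Classical in
/-- The set of vertices joined to the initial set `I` by a path of retained edges;
this is the final removed set `Y(∞)` of the Reed–Frost epidemic. -/
noncomputable def reachedSet (G : SimpleGraph V) (H : Finset (Sym2 V)) (I : Finset V) :
    Finset V :=
  Finset.univ.filter fun v => ∃ u ∈ I, (percSubgraph G H).Reachable u v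

open scoped Classical in
/-- The probability of the percolation configuration with retained edge set `H`, when each
edge of `G` is retained independently with probability `β`. -/
noncomputable def percWeight (G : SimpleGraph V) (β : ℝ) (H : Finset (Sym2 V)) : ℝ :=
  β ^ H.card * (1 - β) ^ (G.edgeFinset.card - H.card)

open scoped Classical in
/-- The expected final size `E[|Y(∞)|]` of the Reed–Frost epidemic on `G` with
per-contact infection probability `β`, started from the initial infected set `I`. -/
noncomputable def expectedFinalSize (G : SimpleGraph V) (β : ℝ) (I : Finset V) : ℝ :=
  ∑ H ∈ G.edgeFinset.powerset, percWeight G β H * ((reachedSet G H I).card : ℝ)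

end VirusSpread

theorem Finset.sum_powerset_pow_mul_pow_mul_ite_subset {α R : Type*} [DecidableEq α]
    [CommRing R] (p : R) {S E : Finset α} (hSE : S ⊆ E) :
    ∑ H ∈ E.powerset, p ^ #H * (1 - p) ^ (#E - #H) * (if S ⊆ H then 1 else 0) = p ^ #S := by
  -- Expand `∏ e ∈ E, (p + g e)` with `g = 0` on `S` and `g = 1 - p` off `S`.
  have hprod : ∏ e ∈ E, (p + if e ∈ S then 0 else 1 - p) = p ^ #S := by
    rw [prod_congr rfl fun e _ => show _ = if e ∈ S then p else 1 by split_ifs <;> ring,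
      prod_ite_mem, inter_eq_right.mpr hSE, prod_const]
  rw [← hprod, prod_add]
  refine sum_congr rfl fun H hH => ?_
  rw [prod_const, ← card_sdiff_of_subset (mem_powerset.mp hH)]
  split_ifs with hSH
  · rw [mul_one, prod_congr rfl fun e he => if_neg fun heS => (mem_sdiff.mp he).2 (hSH heS),
      prod_const]
  · obtain ⟨e, heS, heH⟩ := not_subset.mp hSH
    have he : (if e ∈ S then (0 : R) else 1 - p) = 0 := if_pos heS
    rw [mul_zero, prod_eq_zero (mem_sdiff.mpr ⟨hSE heS, heH⟩) he, mul_zero]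

namespace Matrix

open scoped Norms.L2Operator MatrixOrder

variable {m n : Type*} [Fintype m] [Fintype n]

theorem abs_dotProduct_mulVec_le_of_nonneg {M : Matrix m n ℝ} (hM : ∀ i j, 0 ≤ M i j)
    (x : m → ℝ) (y : n → ℝ) : |x ⬝ᵥ M *ᵥ y| ≤ |x| ⬝ᵥ M *ᵥ |y| := by
  simp only [dotProduct, mulVec, Pi.abs_apply]
  refine (abs_sum_le_sum_abs _ _).trans (sum_le_sum fun i _ => ?_)
  rw [abs_mul]
  refine mul_le_mul_of_nonneg_left ((abs_sum_le_sum_abs _ _).trans_eq ?_) (abs_nonneg _)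
  exact sum_congr rfl fun j _ => by rw [abs_mul, abs_of_nonneg (hM i j)]

theorem dotProduct_mulVec_le_l2_opNorm [DecidableEq n] (M : Matrix m n ℝ) (x : m → ℝ)
    (y : n → ℝ) :
    x ⬝ᵥ M *ᵥ y ≤ ‖M‖ * (√(x ⬝ᵥ x) * √(y ⬝ᵥ y)) := by
  have hx : √(x ⬝ᵥ x) = ‖WithLp.toLp 2 x‖ := by simp [EuclideanSpace.norm_eq, dotProduct, sq]
  have hy : √(y ⬝ᵥ y) = ‖WithLp.toLp 2 y‖ := by simp [EuclideanSpace.norm_eq, dotProduct, sq]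
  have hinner : x ⬝ᵥ M *ᵥ y
      = inner ℝ (WithLp.toLp 2 x) ((EuclideanSpace.equiv m ℝ).symm (M *ᵥ y)) := by
    simp [PiLp.inner_apply, dotProduct, mul_comm]
  rw [hinner, hx, hy, mul_left_comm]
  exact (real_inner_le_norm _ _).trans
    (mul_le_mul_of_nonneg_left (M.l2_opNorm_mulVec _) (norm_nonneg _))

theorem sum_sum_apply_le_l2_opNorm [DecidableEq m] [DecidableEq n] (M : Matrix m n ℝ)
    (I : Finset m) :
    ∑ i ∈ I, ∑ j, M i j ≤ ‖M‖ * √(Fintype.card n * #I) := by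
  set x : m → ℝ := fun i => if i ∈ I then 1 else 0
  have hx : x ⬝ᵥ x = #I := by simp [x, dotProduct]
  have hsum : ∑ i ∈ I, ∑ j, M i j = x ⬝ᵥ M *ᵥ 1 := by
    simp [x, dotProduct, mulVec, ite_mul, sum_ite_mem]
  rw [hsum, mul_comm (Fintype.card n : ℝ), Real.sqrt_mul (Nat.cast_nonneg _), ← hx]
  simpa using dotProduct_mulVec_le_l2_opNorm M x 1

namespace IsHermitian

variable [DecidableEq n] {M : Matrix n n ℝ} (hM : M.IsHermitian)

theorem dotProduct_mulVec_self_le {c : ℝ} (h : ∀ i, hM.eigenvalues i ≤ c) (x : n → ℝ) :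
    x ⬝ᵥ M *ᵥ x ≤ c * (x ⬝ᵥ x) := by
  have hle : M ≤ algebraMap ℝ _ c := by
    refine le_algebraMap_of_spectrum_le ?_ hM.isSelfAdjoint
    rw [hM.spectrum_real_eq_range_eigenvalues]
    rintro _ ⟨i, rfl⟩
    exact h i
  have := hle.dotProduct_mulVec_nonneg x
  simpa [Algebra.algebraMap_eq_smul_one, sub_mulVec, dotProduct_sub, smul_mulVec, one_mulVec,
    dotProduct_smul] using this

theorem abs_eigenvalues_le_of_nonneg (hnn : ∀ i j, 0 ≤ M i j) {c : ℝ}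
    (h : ∀ i, hM.eigenvalues i ≤ c) (j : n) : |hM.eigenvalues j| ≤ c := by
  set v : n → ℝ := ⇑(hM.eigenvectorBasis j)
  have hv : |v| ⬝ᵥ |v| = 1 := by
    have h1 := hM.eigenvectorBasis.orthonormal.1 j
    rw [EuclideanSpace.norm_eq, Real.sqrt_eq_one] at h1
    simpa [dotProduct, v, sq] using h1
  calc |hM.eigenvalues j| = |v ⬝ᵥ M *ᵥ v| := by simp [hM.eigenvalues_eq j, v]
    _ ≤ |v| ⬝ᵥ M *ᵥ |v| := abs_dotProduct_mulVec_le_of_nonneg hnn v v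
    _ ≤ c * (|v| ⬝ᵥ |v|) := hM.dotProduct_mulVec_self_le h _
    _ = c := by rw [hv, mul_one]

theorem l2_opNorm_pow_le {c : ℝ} (hc : 0 ≤ c) (h : ∀ i, |hM.eigenvalues i| ≤ c) (k : ℕ) :
    ‖M ^ k‖ ≤ c ^ k := by
  rw [← cfc_pow_id (R := ℝ) M k hM.isSelfAdjoint]
  refine norm_cfc_le (pow_nonneg hc k) ?_
  rw [hM.spectrum_real_eq_range_eigenvalues]
  rintro _ ⟨i, rfl⟩
  simpa [abs_pow] using pow_le_pow_left₀ (abs_nonneg _) (h i) k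

end IsHermitian

end Matrix

namespace VirusSpread

variable {V : Type*} [Fintype V] [DecidableEq V]

open SimpleGraph

theorem exists_isPath_of_mem_reachedSet {G : SimpleGraph V} {H : Finset (Sym2 V)}
    {I : Finset V} {v : V} (hv : v ∈ reachedSet G H I) :
    ∃ u ∈ I, ∃ p : G.Walk u v, p.IsPath ∧ p.edges.toFinset ⊆ H := by
  classical
  obtain ⟨u, hu, ⟨q⟩⟩ := (mem_filter.mp hv).2
  refine ⟨u, hu, q.bypass.mapLe (show percSubgraph G H ≤ G from fun _ _ h => h.1),
    (Walk.isPath_mapLe _).mpr q.bypass_isPath, fun e he => ?_⟩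
  rw [List.mem_toFinset, Walk.edges_mapLe_eq_edges] at he
  have he' := q.bypass.edges_subset_edgeSet he
  induction e using Sym2.ind
  exact he'.2

theorem card_reachedSet_le (G : SimpleGraph V) [DecidableRel G.Adj] (H : Finset (Sym2 V))
    (I : Finset V) :
    #(reachedSet G H I)
      ≤ ∑ u ∈ I, ∑ v, #{p : G.Path u v | (p : G.Walk u v).edges.toFinset ⊆ H} := by
  rw [sum_comm, card_eq_sum_ones]
  refine (sum_le_sum fun v hv => ?_).trans (sum_le_sum_of_subset (subset_univ _))
  obtain ⟨u, hu, p, hp, hpH⟩ := exists_isPath_of_mem_reachedSet hv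
  refine le_trans ?_ (single_le_sum (fun _ _ => Nat.zero_le _) hu)
  exact card_pos.mpr ⟨⟨p, hp⟩, mem_filter.mpr ⟨mem_univ _, hpH⟩⟩

open scoped Classical in
theorem sum_percWeight_mul_ite_edges_subset (G : SimpleGraph V) (β : ℝ) {u v : V}
    {p : G.Walk u v} (hp : p.IsPath) :
    ∑ H ∈ G.edgeFinset.powerset,
      percWeight G β H * (if p.edges.toFinset ⊆ H then 1 else 0) = β ^ p.length := by
  have hS : p.edges.toFinset ⊆ G.edgeFinset := fun e he =>
    mem_edgeFinset.mpr (p.edges_subset_edgeSet (List.mem_toFinset.mp he))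
  rw [← p.length_edges, ← List.toFinset_card_of_nodup hp.edges_nodup]
  exact sum_powerset_pow_mul_pow_mul_ite_subset β hS

theorem sum_path_pow_length_le (G : SimpleGraph V) [DecidableRel G.Adj] {β : ℝ} (hβ : 0 ≤ β)
    (u v : V) :
    ∑ p : G.Path u v, β ^ (p : G.Walk u v).length
      ≤ ∑ k ∈ range (Fintype.card V), β ^ k * (G.adjMatrix ℝ ^ k) u v := by
  calc ∑ p : G.Path u v, β ^ (p : G.Walk u v).length
      = ∑ q ∈ (univ : Finset (G.Path u v)).map (Function.Embedding.subtype _), β ^ q.length := by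
        rw [sum_map]; rfl
    _ ≤ ∑ q ∈ G.finsetWalkLengthLT (Fintype.card V) u v, β ^ q.length := by
        refine sum_le_sum_of_subset_of_nonneg ?_ fun _ _ _ => pow_nonneg hβ _
        intro q hq
        obtain ⟨p, -, rfl⟩ := mem_map.mp hq
        exact mem_finsetWalkLengthLT_iff.mpr p.2.length_lt
    _ = ∑ k ∈ range (Fintype.card V), ∑ q ∈ G.finsetWalkLength k u v, β ^ q.length :=
        sum_disjiUnion _ _ _
    _ = _ := by
        refine sum_congr rfl fun k _ => ?_
        rw [sum_congr rfl fun q hq => by rw [mem_finsetWalkLength_iff.mp hq], sum_const,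
          adjMatrix_pow_apply_eq_card_walk, card_set_walk_length_eq, nsmul_eq_mul, mul_comm]

theorem sum_mul_card_reachedSet_le (G : SimpleGraph V) [DecidableRel G.Adj]
    (𝓗 : Finset (Finset (Sym2 V))) {w : Finset (Sym2 V) → ℝ} (hw : ∀ H ∈ 𝓗, 0 ≤ w H)
    (I : Finset V) :
    ∑ H ∈ 𝓗, w H * #(reachedSet G H I)
      ≤ ∑ u ∈ I, ∑ v, ∑ p : G.Path u v, ∑ H ∈ 𝓗,
          w H * if (p : G.Walk u v).edges.toFinset ⊆ H then 1 else 0 := by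
  calc ∑ H ∈ 𝓗, w H * #(reachedSet G H I)
      ≤ ∑ H ∈ 𝓗, w H * ∑ u ∈ I, ∑ v, ∑ p : G.Path u v,
          if (p : G.Walk u v).edges.toFinset ⊆ H then (1 : ℝ) else 0 := by
        refine sum_le_sum fun H hH => mul_le_mul_of_nonneg_left ?_ (hw H hH)
        simpa only [Nat.cast_sum, natCast_card_filter] using
          (Nat.cast_le (α := ℝ)).mpr (card_reachedSet_le G H I)
    _ = _ := by
        simp only [mul_sum]
        rw [sum_comm]
        refine sum_congr rfl fun u _ => ?_
        rw [sum_comm]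
        exact sum_congr rfl fun v _ => sum_comm

theorem expectedFinalSize_le_sum_pow_mul_sum_adjMatrix_pow (G : SimpleGraph V)
    [DecidableRel G.Adj] {β : ℝ} (hβ0 : 0 ≤ β) (hβ1 : β ≤ 1) (I : Finset V) :
    expectedFinalSize G β I
      ≤ ∑ k ∈ range (Fintype.card V), β ^ k * ∑ u ∈ I, ∑ v, (G.adjMatrix ℝ ^ k) u v := by
  have hw (H : Finset (Sym2 V)) : 0 ≤ percWeight G β H :=
    mul_nonneg (pow_nonneg hβ0 _) (pow_nonneg (sub_nonneg.mpr hβ1) _)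
  refine (sum_mul_card_reachedSet_le G _ (fun H _ => hw H) I).trans ?_
  calc _ = ∑ u ∈ I, ∑ v, ∑ p : G.Path u v, β ^ (p : G.Walk u v).length :=
        sum_congr rfl fun u _ => sum_congr rfl fun v _ => sum_congr rfl fun p _ =>
          sum_percWeight_mul_ite_edges_subset G β p.2
    _ ≤ ∑ u ∈ I, ∑ v, ∑ k ∈ range (Fintype.card V), β ^ k * (G.adjMatrix ℝ ^ k) u v :=
        sum_le_sum fun u _ => sum_le_sum fun v _ => sum_path_pow_length_le G hβ0 u v
    _ = _ := by
        simp only [mul_sum]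
        exact (sum_congr rfl fun u _ => sum_comm).trans sum_comm

theorem expectedFinalSize_le_sqrt_of_spectral_general
    (G : SimpleGraph V) [DecidableRel G.Adj]
    (β : ℝ) (hβ0 : 0 ≤ β) (hβ1 : β ≤ 1)
    (hA : (G.adjMatrix ℝ).IsHermitian) (lam1 : ℝ)
    (hmax : ∀ v, hA.eigenvalues v ≤ lam1)
    (hthr : β * lam1 < 1)
    (I : Finset V) (hI : I.Nonempty) :
    expectedFinalSize G β I
      ≤ Real.sqrt ((Fintype.card V : ℝ) * (I.card : ℝ)) / (1 - β * lam1) := by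
  obtain ⟨v, -⟩ := hI
  have habs := hA.abs_eigenvalues_le_of_nonneg (fun i j => by
    by_cases h : G.Adj i j <;> simp [h]) hmax
  have hlam : 0 ≤ lam1 := (abs_nonneg _).trans (habs v)
  set N := Real.sqrt ((Fintype.card V : ℝ) * (I.card : ℝ))
  calc expectedFinalSize G β I
      ≤ ∑ k ∈ range (Fintype.card V), β ^ k * ∑ u ∈ I, ∑ w, (G.adjMatrix ℝ ^ k) u w :=
        expectedFinalSize_le_sum_pow_mul_sum_adjMatrix_pow G hβ0 hβ1 I
    _ ≤ ∑ k ∈ range (Fintype.card V), (β * lam1) ^ k * N := by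
        refine sum_le_sum fun k _ => ?_
        rw [mul_pow, mul_assoc]
        refine mul_le_mul_of_nonneg_left ?_ (pow_nonneg hβ0 k)
        exact ((G.adjMatrix ℝ ^ k).sum_sum_apply_le_l2_opNorm I).trans
          (mul_le_mul_of_nonneg_right (hA.l2_opNorm_pow_le hlam habs k) (Real.sqrt_nonneg _))
    _ ≤ N / (1 - β * lam1) := by
        rw [← sum_mul, div_eq_mul_inv, mul_comm N]
        refine mul_le_mul_of_nonneg_right ?_ (Real.sqrt_nonneg _)
        have h := geom_sum_Ico_le_of_lt_one (m := 0) (n := Fintype.card V)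
          (mul_nonneg hβ0 hlam) hthr
        rwa [← range_eq_Ico, pow_zero, one_div] at h

/-- If `β λ₁ < 1`, then the expected final size of the Reed–Frost epidemic is at most
`√(n |X(0)|) / (1 - β λ₁)`. -/
theorem expectedFinalSize_le_sqrt_of_spectral
    (G : SimpleGraph V) [DecidableRel G.Adj]
    (β : ℝ) (hβ0 : 0 ≤ β) (hβ1 : β ≤ 1)
    (hA : (G.adjMatrix ℝ).IsHermitian) (lam1 : ℝ)
    (hmax : ∀ v, hA.eigenvalues v ≤ lam1) (hmem : ∃ v, hA.eigenvalues v = lam1)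
    (hthr : β * lam1 < 1)
    (I : Finset V) (hI : I.Nonempty) :
    expectedFinalSize G β I
      ≤ Real.sqrt ((Fintype.card V : ℝ) * (I.card : ℝ)) / (1 - β * lam1) :=
  expectedFinalSize_le_sqrt_of_spectral_general G β hβ0 hβ1 hA lam1 hmax hthr I hI

end VirusSpread
end

section
/- Let G = (V,E) be a finite simple graph on n vertices with largest adjacency eigenvalue λ₁. Let J be a nonnegative random variable (the infectious period), let λ > 0, and set p_J = 1 − E[e^{−λJ}]. Suppose p_J·λ₁ < 1 and let I ⊆ V be a nonempty initial infected set, |X(0)| = |I|. Then the expected final size of the SIR epidemic with infectious periods distributed as J and exponential(λ) contact times satisfies E[|Y(∞)|] ≤ √(n·|X(0)|) / (1 − p_J λ₁); if moreover G is regular, then E[|Y(∞)|] ≤ |X(0)| / (1 − p_J λ₁). -/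
open Finset

namespace VirusSpread

variable {V : Type*} [Fintype V] [DecidableEq V]

/-!
A vertex is reached only if a retained path joins it to `I`. A path of length `k` is
retained with probability `p_J ^ k`, it has length less than `n`, and the walks of length `k` from
`u` to `v` number `(A ^ k) u v`; hence `E[|Y(∞)|] ≤ ∑_{k < n} p_J ^ k · 𝟙_Iᵀ A ^ k 𝟙`. As `A` is
symmetric with nonnegative entries, testing the Rayleigh quotient on `|v|` for an eigenvector `v`
puts every eigenvalue in `[-λ₁, λ₁]`, so by Cauchy–Schwarz in an orthonormal eigenbasis
`𝟙_Iᵀ A ^ k 𝟙 ≤ λ₁ ^ k ‖𝟙_I‖ ‖𝟙‖ = λ₁ ^ k √(n |I|)`. For a `d`-regular graph `A ^ k 𝟙 = d ^ k 𝟙`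
with `d ≤ λ₁`. Summing the geometric series in `p_J λ₁ < 1` gives both bounds.
-/

theorem _root_.Finset.sum_powerset_filter_superset_pow_mul_pow {α R : Type*} [DecidableEq α]
    [CommRing R] (β : R) {E S : Finset α} (hS : S ⊆ E) :
    ∑ H ∈ E.powerset with S ⊆ H, β ^ #H * (1 - β) ^ (#E - #H) = β ^ #S := by
  -- expand `β ^ #S = ∏ e ∈ E, (β + [e ∉ S] (1 - β))` as a sum over the subsets of `E`
  have h := prod_add (fun _ => β) (fun e => if e ∈ S then 0 else 1 - β) E
  have hprod : ∏ e ∈ E, (β + if e ∈ S then 0 else 1 - β) = β ^ #S :=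
    calc ∏ e ∈ E, (β + if e ∈ S then 0 else 1 - β) = ∏ e ∈ E, if e ∈ S then β else 1 :=
          prod_congr rfl fun e _ => by split_ifs <;> ring
      _ = β ^ #S := by rw [prod_ite_mem, inter_eq_right.mpr hS, prod_const]
  rw [← hprod, h, sum_filter]
  refine sum_congr rfl fun H hH => ?_
  rw [prod_const, ← card_sdiff_of_subset (mem_powerset.mp hH)]
  split_ifs with hSH
  · rw [prod_congr rfl fun e he => if_neg fun heS => (mem_sdiff.mp he).2 (hSH heS), prod_const]
  · obtain ⟨e, heS, heH⟩ := not_subset.mp hSH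
    rw [Finset.prod_eq_zero (mem_sdiff.mpr ⟨hS heS, heH⟩)
      (if_pos heS : (if e ∈ S then (0 : R) else 1 - β) = 0), mul_zero]

open scoped Classical in
noncomputable def percExpectation (G : SimpleGraph V) (β : ℝ) (f : Finset (Sym2 V) → ℝ) : ℝ :=
  ∑ H ∈ G.edgeFinset.powerset, percWeight G β H * f H

section Percolation

-- the same instances as in the definitions above, so that they unfold to one another by `rfl`
open scoped Classical

open SimpleGraph

variable (G : SimpleGraph V) {β : ℝ}

theorem expectedFinalSize_eq_percExpectation (I : Finset V) :
    expectedFinalSize G β I = percExpectation G β fun H => #(reachedSet G H I) := rfl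

omit [DecidableEq V] in
theorem percExpectation_mono (hβ0 : 0 ≤ β) (hβ1 : β ≤ 1) {f g : Finset (Sym2 V) → ℝ}
    (hfg : ∀ H, f H ≤ g H) : percExpectation G β f ≤ percExpectation G β g :=
  sum_le_sum fun H _ => mul_le_mul_of_nonneg_left (hfg H)
    (mul_nonneg (pow_nonneg hβ0 _) (pow_nonneg (sub_nonneg.mpr hβ1) _))

omit [DecidableEq V] in
theorem percExpectation_sum {ι : Type*} (s : Finset ι) (f : ι → Finset (Sym2 V) → ℝ) :
    percExpectation G β (fun H => ∑ i ∈ s, f i H) = ∑ i ∈ s, percExpectation G β (f i) := by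
  simp only [percExpectation, mul_sum]
  exact sum_comm

theorem percExpectation_ite_subset {S : Finset (Sym2 V)} (hS : S ⊆ G.edgeFinset) :
    percExpectation G β (fun H => if S ⊆ H then 1 else 0) = β ^ #S := by
  simp only [percExpectation, percWeight, mul_ite, mul_one, mul_zero, ← sum_filter]
  exact sum_powerset_filter_superset_pow_mul_pow β hS

theorem percExpectation_isPath_retained_le (hβ0 : 0 ≤ β) {u v : V} (w : G.Walk u v) :
    percExpectation G β (fun H => if w.IsPath ∧ w.edges.toFinset ⊆ H then 1 else 0)
      ≤ β ^ w.length := by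
  by_cases hw : w.IsPath
  · have hS : w.edges.toFinset ⊆ G.edgeFinset := fun e he =>
      G.mem_edgeFinset.mpr (w.edges_subset_edgeSet (List.mem_toFinset.mp he))
    simp only [hw, true_and, percExpectation_ite_subset G hS,
      List.toFinset_card_of_nodup hw.isTrail.edges_nodup, Walk.length_edges, le_rfl]
  · simp only [hw, false_and, if_false, percExpectation, mul_zero, sum_const_zero]
    positivity

omit [Fintype V] in
theorem exists_isPath_of_reachable_percSubgraph {H : Finset (Sym2 V)} {u v : V}
    (hr : (percSubgraph G H).Reachable u v) :
    ∃ w : G.Walk u v, w.IsPath ∧ w.edges.toFinset ⊆ H := by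
  obtain ⟨p, hp⟩ := hr.exists_isPath
  refine ⟨p.mapLe (fun _ _ h => h.1 : percSubgraph G H ≤ G),
    (Walk.isPath_mapLe _).mpr hp, fun e he => ?_⟩
  rw [List.mem_toFinset, Walk.edges_mapLe_eq_edges] at he
  induction e using Sym2.ind with
  | _ a b => exact ((percSubgraph G H).mem_edgeSet.mp (p.edges_subset_edgeSet he)).2

theorem card_reachedSet_le_s2 (H : Finset (Sym2 V)) (I : Finset V) :
    #(reachedSet G H I) ≤ ∑ v, ∑ u ∈ I, ∑ k ∈ range (Fintype.card V),
      ∑ w ∈ G.finsetWalkLength k u v, if w.IsPath ∧ w.edges.toFinset ⊆ H then 1 else 0 := by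
  rw [reachedSet, card_filter]
  refine sum_le_sum fun v _ => ?_
  split_ifs with hv
  · obtain ⟨u, hu, hr⟩ := hv
    obtain ⟨w, hw, hH⟩ := exists_isPath_of_reachable_percSubgraph G hr
    refine Order.one_le_iff_pos.mpr <| sum_pos_iff.mpr ⟨u, hu, sum_pos_iff.mpr
      ⟨w.length, mem_range.mpr hw.length_lt, sum_pos_iff.mpr
        ⟨w, mem_finsetWalkLength_iff.mpr rfl, by simp [hw, hH]⟩⟩⟩
  · exact Nat.zero_le _

theorem expectedFinalSize_le_sum_card_walks (hβ0 : 0 ≤ β) (hβ1 : β ≤ 1) (I : Finset V) :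
    expectedFinalSize G β I ≤ ∑ v, ∑ u ∈ I, ∑ k ∈ range (Fintype.card V),
      β ^ k * Nat.card {w : G.Walk u v // w.length = k} := by
  rw [expectedFinalSize_eq_percExpectation]
  refine (percExpectation_mono G hβ0 hβ1 fun H =>
    Nat.cast_le.mpr (card_reachedSet_le_s2 G H I)).trans ?_
  simp only [Nat.cast_sum, Nat.cast_ite, Nat.cast_one, Nat.cast_zero, percExpectation_sum]
  gcongr with v _ u _ k _
  calc ∑ w ∈ G.finsetWalkLength k u v, percExpectation G β
          (fun H => if w.IsPath ∧ w.edges.toFinset ⊆ H then 1 else 0)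
      ≤ ∑ w ∈ G.finsetWalkLength k u v, β ^ k := sum_le_sum fun w hw =>
        (percExpectation_isPath_retained_le G hβ0 w).trans_eq
          (by rw [mem_finsetWalkLength_iff.mp hw])
    _ = β ^ k * Nat.card {w : G.Walk u v // w.length = k} := by
        rw [sum_const, nsmul_eq_mul, mul_comm, Nat.card_eq_fintype_card,
          ← G.card_set_walk_length_eq]
        rfl

end Percolation

section Spectral

open Matrix

variable {n : Type*} [Fintype n]

theorem _root_.Matrix.abs_dotProduct_mulVec_le {A : Matrix n n ℝ} (hnn : ∀ i j, 0 ≤ A i j)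
    (x y : n → ℝ) : |x ⬝ᵥ (A *ᵥ y)| ≤ |x| ⬝ᵥ (A *ᵥ |y|) := by
  refine (abs_sum_le_sum_abs _ _).trans (sum_le_sum fun i _ => ?_)
  rw [abs_mul, Pi.abs_apply]
  refine mul_le_mul_of_nonneg_left ((abs_sum_le_sum_abs _ _).trans (sum_le_sum fun j _ => ?_))
    (abs_nonneg _)
  rw [abs_mul, abs_of_nonneg (hnn i j), Pi.abs_apply]

variable [DecidableEq n]

theorem _root_.Matrix.UnitaryGroup.dotProduct_star_mulVec_self (U : unitaryGroup n ℝ)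
    (x : n → ℝ) : (star (U : Matrix n n ℝ) *ᵥ x) ⬝ᵥ (star (U : Matrix n n ℝ) *ᵥ x) = x ⬝ᵥ x := by
  rw [dotProduct_mulVec, star_eq_conjTranspose, conjTranspose_eq_transpose_of_trivial,
    vecMul_transpose, mulVec_mulVec, ← conjTranspose_eq_transpose_of_trivial,
    ← star_eq_conjTranspose, mem_unitaryGroup_iff.mp U.2, one_mulVec]

variable {A : Matrix n n ℝ}

theorem _root_.Matrix.IsHermitian.pow_eq (hA : A.IsHermitian) (k : ℕ) :
    A ^ k = hA.eigenvectorUnitary * diagonal (hA.eigenvalues ^ k) *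
      star (hA.eigenvectorUnitary : Matrix n n ℝ) := by
  conv_lhs => rw [hA.spectral_theorem, ← map_pow]
  simp [diagonal_pow]

theorem _root_.Matrix.IsHermitian.dotProduct_pow_mulVec (hA : A.IsHermitian) (k : ℕ)
    (x y : n → ℝ) :
    x ⬝ᵥ (A ^ k *ᵥ y) = ∑ i, hA.eigenvalues i ^ k *
      ((star (hA.eigenvectorUnitary : Matrix n n ℝ) *ᵥ x) i *
        (star (hA.eigenvectorUnitary : Matrix n n ℝ) *ᵥ y) i) := by
  rw [hA.pow_eq, ← mulVec_mulVec, ← mulVec_mulVec, dotProduct_mulVec, star_eq_conjTranspose,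
    conjTranspose_eq_transpose_of_trivial, ← mulVec_transpose]
  simp only [dotProduct, mulVec_diagonal, Pi.pow_apply]
  exact sum_congr rfl fun i _ => by ring

theorem _root_.Matrix.IsHermitian.dotProduct_mulVec_self_le_s2 (hA : A.IsHermitian) {lam1 : ℝ}
    (hmax : ∀ i, hA.eigenvalues i ≤ lam1) (x : n → ℝ) :
    x ⬝ᵥ (A *ᵥ x) ≤ lam1 * (x ⬝ᵥ x) := by
  rw [← pow_one A, hA.dotProduct_pow_mulVec,
    ← UnitaryGroup.dotProduct_star_mulVec_self hA.eigenvectorUnitary x, dotProduct, mul_sum]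
  exact sum_le_sum fun i _ => by
    rw [pow_one]; exact mul_le_mul_of_nonneg_right (hmax i) (mul_self_nonneg _)

theorem _root_.Matrix.IsHermitian.abs_eigenvalues_le (hA : A.IsHermitian)
    (hnn : ∀ i j, 0 ≤ A i j) {lam1 : ℝ} (hmax : ∀ i, hA.eigenvalues i ≤ lam1) (i : n) :
    |hA.eigenvalues i| ≤ lam1 := by
  set v : n → ℝ := ⇑(hA.eigenvectorBasis i)
  have hv : v ⬝ᵥ v = 1 := by
    have h := real_inner_self_eq_norm_sq (hA.eigenvectorBasis i)
    rw [hA.eigenvectorBasis.orthonormal.1 i, one_pow, EuclideanSpace.inner_eq_star_dotProduct] at h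
    simpa using h
  have habs : |v| ⬝ᵥ |v| = 1 := by
    simpa only [dotProduct, Pi.abs_apply, abs_mul_abs_self] using hv
  have heig : hA.eigenvalues i = v ⬝ᵥ (A *ᵥ v) := by
    rw [hA.mulVec_eigenvectorBasis, dotProduct_smul, hv, smul_eq_mul, mul_one]
  calc |hA.eigenvalues i| = |v ⬝ᵥ (A *ᵥ v)| := by rw [heig]
    _ ≤ |v| ⬝ᵥ (A *ᵥ |v|) := abs_dotProduct_mulVec_le hnn v v
    _ ≤ lam1 := by simpa [habs] using hA.dotProduct_mulVec_self_le_s2 hmax |v|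

theorem _root_.Matrix.IsHermitian.dotProduct_pow_mulVec_le (hA : A.IsHermitian) {ρ : ℝ}
    (hρ0 : 0 ≤ ρ) (hρ : ∀ i, |hA.eigenvalues i| ≤ ρ) (k : ℕ) (x y : n → ℝ) :
    x ⬝ᵥ (A ^ k *ᵥ y) ≤ ρ ^ k * (√(x ⬝ᵥ x) * √(y ⬝ᵥ y)) := by
  set c := star (hA.eigenvectorUnitary : Matrix n n ℝ) *ᵥ x
  set d := star (hA.eigenvectorUnitary : Matrix n n ℝ) *ᵥ y
  have hcs : ∑ i, |c i| * |d i| ≤ √(x ⬝ᵥ x) * √(y ⬝ᵥ y) := by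
    rw [← UnitaryGroup.dotProduct_star_mulVec_self hA.eigenvectorUnitary x,
      ← UnitaryGroup.dotProduct_star_mulVec_self hA.eigenvectorUnitary y]
    simpa only [dotProduct, sq, abs_mul_abs_self] using
      Real.sum_mul_le_sqrt_mul_sqrt univ (fun i => |c i|) (fun i => |d i|)
  calc x ⬝ᵥ (A ^ k *ᵥ y) = ∑ i, hA.eigenvalues i ^ k * (c i * d i) :=
        hA.dotProduct_pow_mulVec k x y
    _ ≤ ∑ i, ρ ^ k * (|c i| * |d i|) := sum_le_sum fun i _ => by
        rw [← abs_mul]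
        calc hA.eigenvalues i ^ k * (c i * d i) ≤ |hA.eigenvalues i| ^ k * |c i * d i| := by
              rw [← abs_pow, ← abs_mul]; exact le_abs_self _
          _ ≤ ρ ^ k * |c i * d i| := by gcongr; exact hρ i
    _ ≤ ρ ^ k * (√(x ⬝ᵥ x) * √(y ⬝ᵥ y)) := by
        rw [← mul_sum]; exact mul_le_mul_of_nonneg_left hcs (pow_nonneg hρ0 k)

end Spectral

section AdjacencyMatrix

open Matrix

variable {G : SimpleGraph V} [DecidableRel G.Adj]

theorem expectedFinalSize_le_sum_adjMatrix_pow {β : ℝ} (hβ0 : 0 ≤ β) (hβ1 : β ≤ 1)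
    (I : Finset V) :
    expectedFinalSize G β I ≤
      ∑ k ∈ range (Fintype.card V), β ^ k * ∑ u ∈ I, (G.adjMatrix ℝ ^ k *ᵥ 1) u := by
  refine (expectedFinalSize_le_sum_card_walks G hβ0 hβ1 I).trans_eq ?_
  rw [sum_comm, sum_congr rfl fun u _ => sum_comm, sum_comm]
  refine sum_congr rfl fun k _ => ?_
  simp only [mul_sum, mulVec, dotProduct, Pi.one_apply, mul_one,
    SimpleGraph.adjMatrix_pow_apply_eq_card_walk, Nat.card_eq_fintype_card]
  rfl

theorem expectedFinalSize_le_div {β lam1 C : ℝ} (hβ0 : 0 ≤ β) (hβ1 : β ≤ 1) (hlam1 : 0 ≤ lam1)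
    (hthr : β * lam1 < 1) (hC : 0 ≤ C) (I : Finset V)
    (hwalks : ∀ k, ∑ u ∈ I, (G.adjMatrix ℝ ^ k *ᵥ 1) u ≤ C * lam1 ^ k) :
    expectedFinalSize G β I ≤ C / (1 - β * lam1) :=
  calc expectedFinalSize G β I
      ≤ ∑ k ∈ range (Fintype.card V), β ^ k * ∑ u ∈ I, (G.adjMatrix ℝ ^ k *ᵥ 1) u :=
        expectedFinalSize_le_sum_adjMatrix_pow hβ0 hβ1 I
    _ ≤ ∑ k ∈ range (Fintype.card V), C * (β * lam1) ^ k := sum_le_sum fun k _ => by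
        rw [mul_pow, mul_left_comm]
        exact mul_le_mul_of_nonneg_left (hwalks k) (pow_nonneg hβ0 k)
    _ ≤ C / (1 - β * lam1) := by
        rw [← mul_sum, ← mul_one_div]
        gcongr
        simpa using geom_sum_Ico_le_of_lt_one (m := 0) (n := Fintype.card V)
          (mul_nonneg hβ0 hlam1) hthr

theorem sum_adjMatrix_pow_mulVec_one_le (hA : (G.adjMatrix ℝ).IsHermitian) {lam1 : ℝ}
    (hlam1 : 0 ≤ lam1) (hρ : ∀ i, |hA.eigenvalues i| ≤ lam1) (I : Finset V) (k : ℕ) :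
    ∑ u ∈ I, (G.adjMatrix ℝ ^ k *ᵥ 1) u ≤ √(Fintype.card V * #I) * lam1 ^ k := by
  set x : V → ℝ := fun u => if u ∈ I then 1 else 0
  have hx : ∀ z : V → ℝ, x ⬝ᵥ z = ∑ u ∈ I, z u := fun z => by
    simp only [x, dotProduct, ite_mul, one_mul, zero_mul, sum_ite_mem, univ_inter]
  have hxx : x ⬝ᵥ x = #I := by simp [hx, x]
  have h11 : (1 : V → ℝ) ⬝ᵥ 1 = Fintype.card V := by simp [dotProduct]
  rw [← hx, mul_comm, Real.sqrt_mul (Nat.cast_nonneg _), mul_comm √_, ← hxx, ← h11]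
  exact hA.dotProduct_pow_mulVec_le hlam1 hρ k x 1

theorem adjMatrix_pow_mulVec_one_of_isRegularOfDegree {d : ℕ} (hd : G.IsRegularOfDegree d)
    (k : ℕ) : G.adjMatrix ℝ ^ k *ᵥ 1 = (d : ℝ) ^ k • 1 := by
  induction k with
  | zero => simp
  | succ k ih =>
    have h1 : G.adjMatrix ℝ *ᵥ 1 = (d : ℝ) • 1 := funext fun v => by
      simpa using SimpleGraph.adjMatrix_mulVec_const_apply_of_regular (α := ℝ) (a := 1) hd (v := v)
    rw [pow_succ, ← mulVec_mulVec, h1, mulVec_smul, ih, smul_smul, pow_succ, mul_comm]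

theorem degree_le_of_isRegularOfDegree [Nonempty V] (hA : (G.adjMatrix ℝ).IsHermitian)
    {lam1 : ℝ} (hmax : ∀ i, hA.eigenvalues i ≤ lam1) {d : ℕ} (hd : G.IsRegularOfDegree d) :
    (d : ℝ) ≤ lam1 := by
  have h := hA.dotProduct_mulVec_self_le_s2 hmax 1
  rw [← pow_one (G.adjMatrix ℝ), adjMatrix_pow_mulVec_one_of_isRegularOfDegree hd] at h
  simp only [pow_one, dotProduct_smul, smul_eq_mul] at h
  exact le_of_mul_le_mul_right h (by simp [dotProduct, Fintype.card_pos])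

end AdjacencyMatrix

open MeasureTheory in
theorem one_sub_integral_exp_neg_mul_mem_Icc {Ω : Type*} [MeasurableSpace Ω] (μ : Measure Ω)
    [IsProbabilityMeasure μ] {J : Ω → ℝ} (hJ0 : ∀ ω, 0 ≤ J ω) {lam : ℝ} (hlam : 0 ≤ lam)
    (hint : Integrable (fun ω => Real.exp (-lam * J ω)) μ) :
    1 - ∫ ω, Real.exp (-lam * J ω) ∂μ ∈ Set.Icc 0 1 := by
  refine ⟨sub_nonneg.mpr ?_, sub_le_self _ (integral_nonneg fun _ => (Real.exp_pos _).le)⟩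
  calc ∫ ω, Real.exp (-lam * J ω) ∂μ ≤ ∫ _, (1 : ℝ) ∂μ :=
        integral_mono hint (integrable_const 1) fun ω =>
          Real.exp_le_one_iff.mpr (by nlinarith [hJ0 ω])
    _ = 1 := by simp

open MeasureTheory in
theorem expectedFinalSize_le_of_general_infectious_period_general
    (G : SimpleGraph V) [DecidableRel G.Adj]
    {Ω : Type*} [MeasurableSpace Ω] (μ : Measure Ω) [IsProbabilityMeasure μ]
    (J : Ω → ℝ) (hJ0 : ∀ ω, 0 ≤ J ω)
    (lam : ℝ) (hlam : 0 < lam)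
    (hint : Integrable (fun ω => Real.exp (-lam * J ω)) μ)
    (pJ : ℝ) (hpJ : pJ = 1 - ∫ ω, Real.exp (-lam * J ω) ∂μ)
    (hA : (G.adjMatrix ℝ).IsHermitian) (lam1 : ℝ)
    (hmax : ∀ v, hA.eigenvalues v ≤ lam1)
    (hthr : pJ * lam1 < 1)
    (I : Finset V) (hI : I.Nonempty) :
    expectedFinalSize G pJ I
        ≤ Real.sqrt ((Fintype.card V : ℝ) * (I.card : ℝ)) / (1 - pJ * lam1) ∧
      ∀ d : ℕ, G.IsRegularOfDegree d →
        expectedFinalSize G pJ I ≤ (I.card : ℝ) / (1 - pJ * lam1) := by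
  have : Nonempty V := ⟨hI.choose⟩
  obtain ⟨hβ0, hβ1⟩ : pJ ∈ Set.Icc 0 1 :=
    hpJ ▸ one_sub_integral_exp_neg_mul_mem_Icc μ hJ0 hlam.le hint
  have hnn : ∀ i j, 0 ≤ G.adjMatrix ℝ i j := fun i j => by
    rw [SimpleGraph.adjMatrix_apply]; split_ifs <;> norm_num
  have hρ := hA.abs_eigenvalues_le hnn hmax
  have hlam1 : 0 ≤ lam1 := (abs_nonneg _).trans (hρ (Classical.arbitrary V))
  refine ⟨expectedFinalSize_le_div hβ0 hβ1 hlam1 hthr (Real.sqrt_nonneg _) I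
    (sum_adjMatrix_pow_mulVec_one_le hA hlam1 hρ I), fun d hd => ?_⟩
  refine expectedFinalSize_le_div hβ0 hβ1 hlam1 hthr (Nat.cast_nonneg _) I fun k => ?_
  simp only [adjMatrix_pow_mulVec_one_of_isRegularOfDegree hd, Pi.smul_apply, Pi.one_apply,
    smul_eq_mul, mul_one, sum_const, nsmul_eq_mul]
  gcongr
  exact degree_le_of_isRegularOfDegree hA hmax hd

open MeasureTheory in
/-- For the SIR epidemic with general infectious periods distributed as `J` and
exponential(λ) contact times, if `p_J λ₁ < 1` where `p_J = 1 - E[exp(-λ J)]`, then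
`E[|Y(∞)|] ≤ √(n |X(0)|)/(1 - p_J λ₁)`, and for regular graphs
`E[|Y(∞)|] ≤ |X(0)|/(1 - p_J λ₁)`. -/
theorem expectedFinalSize_le_of_general_infectious_period
    (G : SimpleGraph V) [DecidableRel G.Adj]
    {Ω : Type*} [MeasurableSpace Ω] (μ : Measure Ω) [IsProbabilityMeasure μ]
    (J : Ω → ℝ) (hJmeas : Measurable J) (hJ0 : ∀ ω, 0 ≤ J ω)
    (lam : ℝ) (hlam : 0 < lam)
    (hint : Integrable (fun ω => Real.exp (-lam * J ω)) μ)
    (pJ : ℝ) (hpJ : pJ = 1 - ∫ ω, Real.exp (-lam * J ω) ∂μ)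
    (hA : (G.adjMatrix ℝ).IsHermitian) (lam1 : ℝ)
    (hmax : ∀ v, hA.eigenvalues v ≤ lam1) (hmem : ∃ v, hA.eigenvalues v = lam1)
    (hthr : pJ * lam1 < 1)
    (I : Finset V) (hI : I.Nonempty) :
    expectedFinalSize G pJ I
        ≤ Real.sqrt ((Fintype.card V : ℝ) * (I.card : ℝ)) / (1 - pJ * lam1) ∧
      ∀ d : ℕ, G.IsRegularOfDegree d →
        expectedFinalSize G pJ I ≤ (I.card : ℝ) / (1 - pJ * lam1) :=
  expectedFinalSize_le_of_general_infectious_period_general G μ J hJ0 lam hlam hint pJ hpJ hA lam1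
    hmax hthr I hI

end VirusSpread
end

section
/- Let G be the complete graph on n vertices, fix c > 1, and let β = c/(n−1). Let γ ∈ (0,1) be the unique positive solution of γ + e^{−γc} = 1. Consider the Reed-Frost epidemic on G with infection probability β started from any nonempty initial set of infectives. Then for every ε > 0 there exists N such that for all n ≥ N, the expected final size of the epidemic satisfies E[|Y(∞)|] ≥ (γ² − ε)·n. -/
/-!
The final size from `I` is at least the size of the cluster of one `u ∈ I`, whose expectation is
`∑ v, P(u ↔ v)`. Split the edge probability as `1 - β = (1 - β₁) (1 - β₂)` with `β₂ ≈ δ / n`.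
Under `β₁`, until the cluster of a vertex has `k ≈ δ n` vertices its exploration dominates a
branching process with `Bin(n - 1 - k, β₁)` offspring, so the cluster exceeds `k` vertices with
probability at least `q` whenever `exp (-c q) < 1 - q`; by strict convexity of `exp` this holds
for every `q ∈ (0, γ)`. By Harris' inequality the clusters of `u` and `v` are both that large with
probability at least `q²`, and the `β₂`-edges then join them except with probability
`(1 - β₂) ^ k² = o(1)`. Hence `E |Y(∞)| ≥ (q² - o(1)) n`, and `q²` can be taken close to `γ²`.
-/

open Finset

namespace VirusSpread

section BernoulliExpectation

variable {α : Type*} {β : ℝ} {E : Finset α} {f g : Finset α → ℝ}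

noncomputable def bernoulliWeight (β : ℝ) (E H : Finset α) : ℝ :=
  β ^ #H * (1 - β) ^ (#E - #H)

noncomputable def bernoulliExpect (β : ℝ) (E : Finset α) (f : Finset α → ℝ) : ℝ :=
  ∑ H ∈ E.powerset, bernoulliWeight β E H * f H

theorem bernoulliWeight_nonneg (hβ0 : 0 ≤ β) (hβ1 : β ≤ 1) (E H : Finset α) :
    0 ≤ bernoulliWeight β E H := by
  have := sub_nonneg.2 hβ1
  unfold bernoulliWeight
  positivity

theorem bernoulliWeight_mul_bernoulliWeight [DecidableEq α] {s t : Finset α} (hs : s ⊆ E)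
    (ht : t ⊆ E) :
    bernoulliWeight β E s * bernoulliWeight β E t =
      bernoulliWeight β E (s ∩ t) * bernoulliWeight β E (s ∪ t) := by
  have := card_union_add_card_inter s t
  have := card_le_card hs
  have := card_le_card ht
  have := card_le_card (union_subset hs ht)
  have := card_le_card ((inter_subset_left (s₂ := t)).trans hs)
  have e1 : #s + #t = #(s ∩ t) + #(s ∪ t) := by omega
  have e2 : #E - #s + (#E - #t) = #E - #(s ∩ t) + (#E - #(s ∪ t)) := by omega
  simp only [bernoulliWeight]
  rw [mul_mul_mul_comm, mul_mul_mul_comm (β ^ #(s ∩ t)), ← pow_add, ← pow_add, ← pow_add,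
    ← pow_add, e1, e2]

theorem bernoulliExpect_empty (β : ℝ) (f : Finset α → ℝ) : bernoulliExpect β ∅ f = f ∅ := by
  simp [bernoulliExpect, bernoulliWeight]

theorem bernoulliExpect_insert [DecidableEq α] {a : α} (ha : a ∉ E) (f : Finset α → ℝ) :
    bernoulliExpect β (insert a E) f =
      β * bernoulliExpect β E (fun H => f (insert a H)) + (1 - β) * bernoulliExpect β E f := by
  simp only [bernoulliExpect, bernoulliWeight, sum_powerset_insert ha, mul_sum,
    card_insert_of_notMem ha]
  rw [add_comm]
  congr 1 <;> refine sum_congr rfl fun H hH => ?_ <;> have hHE := mem_powerset.mp hH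
  · rw [card_insert_of_notMem fun h => ha (hHE h), Nat.add_sub_add_right, pow_succ]
    ring
  · rw [Nat.sub_add_comm (card_le_card hHE), pow_succ]
    ring

theorem bernoulliExpect_congr (h : ∀ H ⊆ E, f H = g H) :
    bernoulliExpect β E f = bernoulliExpect β E g :=
  sum_congr rfl fun H hH => by rw [h H (mem_powerset.mp hH)]

theorem bernoulliExpect_add (f g : Finset α → ℝ) :
    bernoulliExpect β E (fun H => f H + g H) = bernoulliExpect β E f + bernoulliExpect β E g := by
  simp only [bernoulliExpect, mul_add, sum_add_distrib]

theorem bernoulliExpect_const_mul (r : ℝ) (f : Finset α → ℝ) :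
    bernoulliExpect β E (fun H => r * f H) = r * bernoulliExpect β E f := by
  simp only [bernoulliExpect, mul_sum]
  exact sum_congr rfl fun H _ => by ring

theorem bernoulliExpect_sub (f g : Finset α → ℝ) :
    bernoulliExpect β E (fun H => f H - g H) = bernoulliExpect β E f - bernoulliExpect β E g := by
  simp only [bernoulliExpect, mul_sub, sum_sub_distrib]

theorem bernoulliExpect_sum {ι : Type*} (s : Finset ι) (f : ι → Finset α → ℝ) :
    bernoulliExpect β E (fun H => ∑ i ∈ s, f i H) = ∑ i ∈ s, bernoulliExpect β E (f i) := by
  simp only [bernoulliExpect, mul_sum]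
  exact sum_comm

theorem bernoulliExpect_pow_card (E : Finset α) (x : ℝ) :
    bernoulliExpect β E (fun H => x ^ #H) = (β * x + (1 - β)) ^ #E := by
  classical
  rw [← prod_const, prod_add, bernoulliExpect]
  refine sum_congr rfl fun H hH => ?_
  rw [bernoulliWeight, prod_const, prod_const, card_sdiff_of_subset (mem_powerset.mp hH), mul_pow]
  ring

theorem bernoulliExpect_pow_card_le {ρ : ℝ} {m : ℕ} (hβ0 : 0 ≤ β) (hβ1 : β ≤ 1) (hρ0 : 0 ≤ ρ)
    (hρ1 : ρ ≤ 1) (hρ : (β * ρ + (1 - β)) ^ m ≤ ρ) (hm : m ≤ #E) :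
    bernoulliExpect β E (fun H => ρ ^ #H) ≤ ρ := by
  rw [bernoulliExpect_pow_card]
  exact (pow_le_pow_of_le_one (by nlinarith) (by nlinarith) hm).trans hρ

theorem bernoulliExpect_const (E : Finset α) (r : ℝ) : bernoulliExpect β E (fun _ => r) = r := by
  have h := bernoulliExpect_const_mul (β := β) (E := E) r (fun _ => 1)
  rw [bernoulliExpect_congr (g := fun H => (1 : ℝ) ^ #H) fun _ _ => (one_pow _).symm,
    bernoulliExpect_pow_card] at h
  simpa using h

theorem bernoulliExpect_nonneg (hβ0 : 0 ≤ β) (hβ1 : β ≤ 1) (hf : ∀ H ⊆ E, 0 ≤ f H) :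
    0 ≤ bernoulliExpect β E f :=
  sum_nonneg fun H hH =>
    mul_nonneg (bernoulliWeight_nonneg hβ0 hβ1 E H) (hf H (mem_powerset.mp hH))

theorem bernoulliExpect_mono (hβ0 : 0 ≤ β) (hβ1 : β ≤ 1) (hfg : ∀ H ⊆ E, f H ≤ g H) :
    bernoulliExpect β E f ≤ bernoulliExpect β E g :=
  sum_le_sum fun H hH =>
    mul_le_mul_of_nonneg_left (hfg H (mem_powerset.mp hH)) (bernoulliWeight_nonneg hβ0 hβ1 E H)

theorem bernoulliExpect_union [DecidableEq α] {E₁ E₂ : Finset α} (hd : Disjoint E₁ E₂)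
    (f : Finset α → ℝ) :
    bernoulliExpect β (E₁ ∪ E₂) f =
      bernoulliExpect β E₁ (fun H₁ => bernoulliExpect β E₂ fun H₂ => f (H₁ ∪ H₂)) := by
  induction E₁ using Finset.induction generalizing f with
  | empty => simp [bernoulliExpect_empty]
  | @insert a E₁ ha ih =>
    obtain ⟨haE₂, hd⟩ := disjoint_insert_left.mp hd
    rw [insert_union, bernoulliExpect_insert (by simp [ha, haE₂]), bernoulliExpect_insert ha,
      ih hd, ih hd]
    simp only [insert_union]

theorem bernoulliExpect_eq_of_inter [DecidableEq α] {E₀ : Finset α} (hE₀ : E₀ ⊆ E)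
    (g : Finset α → ℝ) (h : ∀ H ⊆ E, f H = g (H ∩ E₀)) :
    bernoulliExpect β E f = bernoulliExpect β E₀ g := by
  rw [← union_sdiff_of_subset hE₀, bernoulliExpect_union disjoint_sdiff]
  refine bernoulliExpect_congr fun H₁ hH₁ => ?_
  rw [← bernoulliExpect_const (β := β) (E \ E₀) (g H₁)]
  refine bernoulliExpect_congr fun H₂ hH₂ => ?_
  rw [h _ (union_subset (hH₁.trans hE₀) (hH₂.trans sdiff_subset)), union_inter_distrib_right,
    inter_eq_left.mpr hH₁, disjoint_iff_inter_eq_empty.mp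
      (sdiff_disjoint.mono_left hH₂), union_empty]

theorem bernoulliExpect_eq_bernoulliExpect_union [DecidableEq α] {β₁ β₂ : ℝ}
    (hβ : 1 - β = (1 - β₁) * (1 - β₂)) (E : Finset α) (f : Finset α → ℝ) :
    bernoulliExpect β E f =
      bernoulliExpect β₁ E (fun H₁ => bernoulliExpect β₂ E fun H₂ => f (H₁ ∪ H₂)) := by
  induction E using Finset.induction generalizing f with
  | empty => simp [bernoulliExpect_empty]
  | @insert a E ha ih =>
    simp only [bernoulliExpect_insert ha, ih, insert_union, union_insert, insert_idem,
      bernoulliExpect_add, bernoulliExpect_const_mul]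
    linear_combination
      ((bernoulliExpect β₁ E fun H₁ => bernoulliExpect β₂ E fun H₂ => f (H₁ ∪ H₂)) -
        bernoulliExpect β₁ E fun H₁ => bernoulliExpect β₂ E fun H₂ => f (insert a (H₁ ∪ H₂))) * hβ

theorem bernoulliExpect_inter_eq_empty [DecidableEq α] {F : Finset α} (hF : F ⊆ E) :
    bernoulliExpect β E (fun H => if H ∩ F = ∅ then 1 else 0) = (1 - β) ^ #F := by
  rw [bernoulliExpect_eq_of_inter hF (fun H => (0 : ℝ) ^ #H) fun H _ => by
    simp [zero_pow_eq, card_eq_zero], bernoulliExpect_pow_card]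
  ring

/-- Harris inequality. -/
theorem bernoulliExpect_mul_le_of_monotone (hβ0 : 0 ≤ β) (hβ1 : β ≤ 1)
    (hf0 : 0 ≤ f) (hg0 : 0 ≤ g) (hf : Monotone f) (hg : Monotone g) :
    bernoulliExpect β E f * bernoulliExpect β E g ≤ bernoulliExpect β E (fun H => f H * g H) := by
  classical
  set μ := bernoulliWeight β E
  have hμ0 : 0 ≤ μ := bernoulliWeight_nonneg hβ0 hβ1 E
  have key := E.four_functions_theorem (f₁ := μ * f) (f₂ := μ * g) (f₃ := μ)
    (f₄ := fun H => μ H * (f H * g H)) (mul_nonneg hμ0 hf0) (mul_nonneg hμ0 hg0) hμ0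
    (fun H => mul_nonneg (hμ0 H) (mul_nonneg (hf0 H) (hg0 H)))
    (fun s hs t ht => by
      simp only [Pi.mul_apply]
      calc μ s * f s * (μ t * g t) = μ s * μ t * (f s * g t) := by ring
        _ ≤ μ s * μ t * (f (s ∪ t) * g (s ∪ t)) :=
          mul_le_mul_of_nonneg_left (mul_le_mul (hf subset_union_left) (hg subset_union_right)
            (hg0 t) (hf0 _)) (mul_nonneg (hμ0 s) (hμ0 t))
        _ = μ (s ∩ t) * (μ (s ∪ t) * (f (s ∪ t) * g (s ∪ t))) := by
          rw [bernoulliWeight_mul_bernoulliWeight hs ht]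
          ring)
    subset_rfl subset_rfl
  rw [powerset_infs_powerset_self, powerset_sups_powerset_self] at key
  have h1 : ∑ H ∈ E.powerset, μ H = 1 := by
    simpa [bernoulliExpect] using bernoulliExpect_const (β := β) E 1
  simpa [bernoulliExpect, h1, μ, mul_assoc] using key

theorem bernoulliExpect_image {α' : Type*} [DecidableEq α'] {φ : α → α'}
    (hφ : Function.Injective φ) (E : Finset α) (f : Finset α' → ℝ) :
    bernoulliExpect β (E.image φ) f = bernoulliExpect β E (fun H => f (H.image φ)) := by
  rw [bernoulliExpect, powerset_image, sum_image (image_injOn_powerset_of_injOn hφ.injOn),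
    bernoulliExpect]
  simp only [bernoulliWeight, card_image_of_injective _ hφ]

end BernoulliExpectation

section Clusters

variable {V : Type*} {G : SimpleGraph V} {H H' D : Finset (Sym2 V)}

theorem percSubgraph_mono (h : H ⊆ H') : percSubgraph G H ≤ percSubgraph G H' :=
  fun _ _ hab => ⟨hab.1, h hab.2⟩

variable [Fintype V] [DecidableEq V] {I J S : Finset V}

theorem mem_reachedSet {v : V} :
    v ∈ reachedSet G H I ↔ ∃ u ∈ I, (percSubgraph G H).Reachable u v := by
  simp [reachedSet]

theorem mem_reachedSet_singleton {u v : V} :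
    v ∈ reachedSet G H {u} ↔ (percSubgraph G H).Reachable u v := by
  simp [mem_reachedSet]

theorem disjoint_reachedSet_singleton {u v : V} (h : ¬(percSubgraph G H).Reachable u v) :
    Disjoint (reachedSet G H {u}) (reachedSet G H {v}) :=
  Finset.disjoint_left.2 fun _ hu hv =>
    h ((mem_reachedSet_singleton.1 hu).trans (mem_reachedSet_singleton.1 hv).symm)

theorem subset_reachedSet : I ⊆ reachedSet G H I :=
  fun u hu => mem_reachedSet.2 ⟨u, hu, .refl u⟩

theorem reachedSet_mono (h : H ⊆ H') : reachedSet G H I ⊆ reachedSet G H' I := fun v hv => by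
  obtain ⟨u, hu, huv⟩ := mem_reachedSet.1 hv
  exact mem_reachedSet.2 ⟨u, hu, huv.mono (percSubgraph_mono h)⟩

theorem mem_reachedSet_of_adj {a b : V} (ha : a ∈ reachedSet G H I)
    (hab : (percSubgraph G H).Adj a b) : b ∈ reachedSet G H I := by
  obtain ⟨u, hu, hua⟩ := mem_reachedSet.1 ha
  exact mem_reachedSet.2 ⟨u, hu, hua.trans hab.reachable⟩

theorem reachedSet_subset_of_closed (hI : I ⊆ S)
    (hS : ∀ a b, a ∈ S → (percSubgraph G H).Adj a b → b ∈ S) : reachedSet G H I ⊆ S := by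
  intro v hv
  obtain ⟨u, hu, huv⟩ := mem_reachedSet.1 hv
  replace huv := (SimpleGraph.reachable_iff_reflTransGen u v).1 huv
  clear hv
  induction huv with
  | refl => exact hI hu
  | tail _ hbc ih => exact hS _ _ ih hbc

theorem reachedSet_subset_reachedSet (h : J ⊆ reachedSet G H I) :
    reachedSet G H J ⊆ reachedSet G H I :=
  reachedSet_subset_of_closed h fun _ _ ha hab => mem_reachedSet_of_adj ha hab

theorem reachedSet_union_of_forall_mem (hD : ∀ e ∈ D, ∀ x ∈ e, x ∈ I) :
    reachedSet G (H ∪ D) I = reachedSet G H I := by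
  refine (reachedSet_subset_of_closed subset_reachedSet fun a b ha hab => ?_).antisymm
    (reachedSet_mono subset_union_left)
  rcases mem_union.1 hab.2 with hH | hD'
  · exact mem_reachedSet_of_adj ha ⟨hab.1, hH⟩
  · exact subset_reachedSet (hD _ hD' b (Sym2.mem_mk_right a b))

open scoped Classical in
theorem card_reachedSet_singleton_eq_sum (u : V) :
    (#(reachedSet G H {u}) : ℝ) = ∑ v, if (percSubgraph G H).Reachable u v then 1 else 0 := by
  rw [reachedSet, card_filter]
  push_cast
  simp

end Clusters

section Exploration

variable {V : Type*} [DecidableEq V] {W L N : Finset V} {l : V}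

def explorationEdges (W L : Finset V) : Finset (Sym2 V) :=
  ((W ∪ L).sym2 \ L.sym2).filter fun e => ¬e.IsDiag

theorem mk_mem_explorationEdges {a b : V} :
    s(a, b) ∈ explorationEdges W L ↔ a ≠ b ∧ a ∈ W ∪ L ∧ b ∈ W ∪ L ∧ ¬(a ∈ L ∧ b ∈ L) := by
  simp only [explorationEdges, mem_filter, mem_sdiff, mk_mem_sym2_iff, Sym2.mk_isDiag_iff]
  tauto

theorem explorationEdges_insert (hlW : l ∉ W) (hWL : Disjoint W L) :
    explorationEdges W (insert l L) = W.image (fun w => s(l, w)) ∪ explorationEdges W L := by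
  ext e
  induction e using Sym2.ind with
  | _ a b =>
    have ha : a ∈ W → a ∉ L := fun h => Finset.disjoint_left.1 hWL h
    have hb : b ∈ W → b ∉ L := fun h => Finset.disjoint_left.1 hWL h
    simp only [mem_union, mem_image, mk_mem_explorationEdges, mem_insert, Sym2.eq_iff]
    grind

theorem disjoint_image_explorationEdges (hlW : l ∉ W) (hlL : l ∉ L) :
    Disjoint (W.image fun w => s(l, w)) (explorationEdges W L) := by
  simp only [Finset.disjoint_left, mem_image]
  rintro _ ⟨w, -, rfl⟩ h
  have := (mk_mem_explorationEdges.1 h).2.1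
  simp_all

theorem notMem_of_mem_explorationEdges (hlW : l ∉ W) (hlL : l ∉ L) {e : Sym2 V}
    (he : e ∈ explorationEdges W L) : l ∉ e := by
  induction e using Sym2.ind with
  | _ a b =>
    have := mk_mem_explorationEdges.1 he
    rw [Sym2.mem_iff]
    grind

theorem explorationEdges_sdiff_union_subset (hN : N ⊆ W) :
    explorationEdges (W \ N) (L ∪ N) ⊆ explorationEdges W L := by
  intro e
  induction e using Sym2.ind with
  | _ a b =>
    simp only [mk_mem_explorationEdges, mem_union, mem_sdiff]
    grind

theorem mem_of_mem_explorationEdges_of_notMem {e : Sym2 V}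
    (he : e ∈ explorationEdges W L) (he' : e ∉ explorationEdges (W \ N) (L ∪ N)) :
    ∀ x ∈ e, x ∈ L ∪ N := by
  induction e using Sym2.ind with
  | _ a b =>
    simp only [mk_mem_explorationEdges, mem_union, mem_sdiff, Sym2.mem_iff] at he he' ⊢
    grind

variable [Fintype V]

theorem explorationEdges_erase_singleton (u : V) :
    explorationEdges (univ.erase u) {u} = (⊤ : SimpleGraph V).edgeFinset := by
  ext e
  induction e using Sym2.ind with
  | _ a b =>
    simp only [mk_mem_explorationEdges, SimpleGraph.mem_edgeFinset, SimpleGraph.mem_edgeSet,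
      SimpleGraph.top_adj, mem_union, mem_erase, mem_univ, mem_singleton]
    grind

theorem reachedSet_image_union {H : Finset (Sym2 V)} (hlN : l ∉ N) (hH : ∀ e ∈ H, l ∉ e) :
    reachedSet ⊤ (N.image (fun w => s(l, w)) ∪ H) (insert l L) =
      insert l (reachedSet ⊤ H (L ∪ N)) := by
  refine (reachedSet_subset_of_closed ?_ fun a b ha hab => ?_).antisymm (insert_subset ?_ ?_)
  · exact insert_subset_insert _ (subset_union_left.trans subset_reachedSet)
  · rcases mem_union.1 hab.2 with hl | hH'
    · obtain ⟨w, hw, hlw⟩ := mem_image.1 hl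
      rcases Sym2.eq_iff.1 hlw with ⟨rfl, rfl⟩ | ⟨rfl, rfl⟩
      · exact mem_insert_of_mem (subset_reachedSet (mem_union_right _ hw))
      · exact mem_insert_self _ _
    · have hal : a ≠ l := fun h => hH _ hH' (h ▸ Sym2.mem_mk_left a b)
      exact mem_insert_of_mem
        (mem_reachedSet_of_adj ((mem_insert.1 ha).resolve_left hal) ⟨hab.1, hH'⟩)
  · exact subset_reachedSet (mem_insert_self l L)
  · refine (reachedSet_mono subset_union_right).trans (reachedSet_subset_reachedSet ?_)
    refine union_subset (subset_insert l L |>.trans subset_reachedSet) fun w hw => ?_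
    exact mem_reachedSet_of_adj (subset_reachedSet (mem_insert_self l L))
      ⟨fun h => hlN (h ▸ hw), mem_union_left _ (mem_image_of_mem _ hw)⟩

theorem reachedSet_inter_explorationEdges {G : SimpleGraph V} {H : Finset (Sym2 V)}
    (hH : H ⊆ explorationEdges W L) :
    reachedSet G (H ∩ explorationEdges (W \ N) (L ∪ N)) (L ∪ N) = reachedSet G H (L ∪ N) := by
  conv_rhs => rw [← sdiff_union_inter H (explorationEdges (W \ N) (L ∪ N)), union_comm]
  refine (reachedSet_union_of_forall_mem fun e he => ?_).symm
  obtain ⟨heH, he'⟩ := mem_sdiff.1 he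
  exact mem_of_mem_explorationEdges_of_notMem (hH heH) he'

theorem card_inter_reachedSet_image_union {H : Finset (Sym2 V)} (hlW : l ∉ W) (hlL : l ∉ L)
    (hN : N ⊆ W) (hH : H ⊆ explorationEdges W L) :
    #(W ∩ reachedSet ⊤ (N.image (fun w => s(l, w)) ∪ H) (insert l L)) =
      #N + #((W \ N) ∩ reachedSet ⊤ (H ∩ explorationEdges (W \ N) (L ∪ N)) (L ∪ N)) := by
  rw [reachedSet_image_union (fun h => hlW (hN h))
      fun e he => notMem_of_mem_explorationEdges hlW hlL (hH he),
    inter_insert_of_notMem hlW, reachedSet_inter_explorationEdges hH]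
  have hNR : N ⊆ W ∩ reachedSet ⊤ H (L ∪ N) :=
    subset_inter hN (subset_union_right.trans subset_reachedSet)
  rw [← card_sdiff_add_card_eq_card hNR, add_comm, sdiff_inter_right_comm]

/-- Exploring the clusters of `L` one vertex of `L` at a time, the neighbours found in `W` become
new vertices of `L`: while `W` has at least `m` vertices, this dominates a branching process with
`Bin(m, β)` offspring, whose extinction probability is at most `ρ`. -/
theorem bernoulliExpect_card_inter_reachedSet_lt_le {β ρ : ℝ} {m : ℕ} (hβ0 : 0 ≤ β)
    (hβ1 : β ≤ 1) (hρ0 : 0 ≤ ρ) (hρ1 : ρ ≤ 1) (hρ : (β * ρ + (1 - β)) ^ m ≤ ρ)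
    (hWL : Disjoint W L) {j : ℕ} (hj : m + j ≤ #W) :
    bernoulliExpect β (explorationEdges W L)
      (fun H => if #(W ∩ reachedSet ⊤ H L) < j then 1 else 0) ≤ ρ ^ #L := by
  induction hn : j + #L using Nat.strong_induction_on generalizing W L j with
  | _ n ih =>
  rcases L.eq_empty_or_nonempty with rfl | ⟨l, hl⟩
  · calc _ ≤ bernoulliExpect β (explorationEdges W ∅) (fun _ => 1) :=
          bernoulliExpect_mono hβ0 hβ1 fun H _ => by split_ifs <;> norm_num
      _ = ρ ^ #(∅ : Finset V) := by rw [bernoulliExpect_const, card_empty, pow_zero]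
  obtain ⟨L, hlL, rfl⟩ : ∃ L', l ∉ L' ∧ L = insert l L' :=
    ⟨L.erase l, notMem_erase l L, (insert_erase hl).symm⟩
  have hlW : l ∉ W := fun h => Finset.disjoint_left.1 hWL h (mem_insert_self l L)
  have hWL' : Disjoint W L := hWL.mono_right (subset_insert l L)
  rw [explorationEdges_insert hlW hWL',
    bernoulliExpect_union (disjoint_image_explorationEdges hlW hlL),
    bernoulliExpect_image fun _ _ h => Sym2.congr_right.1 h]
  have hnbhd : ∀ N ⊆ W, bernoulliExpect β (explorationEdges W L) (fun H =>
      if #(W ∩ reachedSet ⊤ (N.image (fun w => s(l, w)) ∪ H) (insert l L)) < j then 1 else 0)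
        ≤ ρ ^ (#L + #N) := by
    intro N hN
    by_cases hjN : j ≤ #N
    · calc _ = bernoulliExpect β (explorationEdges W L) (fun _ => 0) :=
            bernoulliExpect_congr fun H hH => by
              rw [card_inter_reachedSet_image_union hlW hlL hN hH, if_neg (by omega)]
        _ ≤ _ := by rw [bernoulliExpect_const]; positivity
    rw [bernoulliExpect_eq_of_inter (explorationEdges_sdiff_union_subset hN)
      (fun H => if #((W \ N) ∩ reachedSet ⊤ H (L ∪ N)) < j - #N then 1 else 0)
      fun H hH => by
        rw [card_inter_reachedSet_image_union hlW hlL hN hH]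
        exact if_congr (by omega) rfl rfl]
    have hLN : Disjoint L N := (hWL'.mono_left hN).symm
    rw [← card_union_of_disjoint hLN]
    refine ih (j - #N + #(L ∪ N)) ?_
      (disjoint_union_right.2 ⟨hWL'.mono_left sdiff_subset, sdiff_disjoint⟩) ?_ rfl
    · rw [card_union_of_disjoint hLN, ← hn, card_insert_of_notMem hlL]
      omega
    · rw [card_sdiff_of_subset hN]
      omega
  calc _ ≤ bernoulliExpect β W (fun N => ρ ^ #L * ρ ^ #N) :=
        bernoulliExpect_mono hβ0 hβ1 fun N hN => (hnbhd N hN).trans_eq (pow_add _ _ _)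
    _ ≤ ρ ^ #L * ρ := by
        rw [bernoulliExpect_const_mul]
        exact mul_le_mul_of_nonneg_left
          (bernoulliExpect_pow_card_le hβ0 hβ1 hρ0 hρ1 hρ (by omega)) (by positivity)
    _ = ρ ^ #(insert l L) := by rw [card_insert_of_notMem hlL, pow_succ]

end Exploration

section CompleteGraph

variable {V : Type*} [DecidableEq V]

theorem card_image_mk_product {S T : Finset V} (hST : Disjoint S T) :
    #((S ×ˢ T).image fun p => s(p.1, p.2)) = #S * #T := by
  rw [card_image_of_injOn, card_product]
  rintro ⟨a, b⟩ hab ⟨a', b'⟩ hab' h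
  simp only [coe_product, Set.mem_prod, mem_coe] at hab hab'
  rcases Sym2.eq_iff.1 h with ⟨rfl, rfl⟩ | ⟨rfl, rfl⟩
  · rfl
  · exact absurd hab'.2 (Finset.disjoint_left.1 hST hab.1)

variable [Fintype V] {β q : ℝ} {k : ℕ}

theorem le_bernoulliExpect_lt_card_reachedSet (hβ0 : 0 ≤ β) (hβ1 : β ≤ 1) (hq0 : 0 ≤ q)
    (hq1 : q ≤ 1) (hk : k < Fintype.card V) (hq : (1 - β * q) ^ (Fintype.card V - 1 - k) ≤ 1 - q)
    (u : V) :
    q ≤ bernoulliExpect β (⊤ : SimpleGraph V).edgeFinset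
      (fun H => if k < #(reachedSet ⊤ H {u}) then 1 else 0) := by
  have hW : #(univ.erase u) = Fintype.card V - 1 := by
    rw [card_erase_of_mem (mem_univ u), card_univ]
  have h := bernoulliExpect_card_inter_reachedSet_lt_le (ρ := 1 - q) (W := univ.erase u)
    (L := {u}) (j := k) hβ0 hβ1 (by linarith) (by linarith)
    (by rwa [show β * (1 - q) + (1 - β) = 1 - β * q by ring]) (by simp) (by omega)
  rw [explorationEdges_erase_singleton, card_singleton, pow_one] at h
  have hcompl : ∀ H, (if k < #(reachedSet ⊤ H {u}) then (1 : ℝ) else 0) =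
      1 - if #(univ.erase u ∩ reachedSet ⊤ H {u}) < k then 1 else 0 := by
    intro H
    have hu : u ∈ reachedSet ⊤ H {u} := subset_reachedSet (mem_singleton_self u)
    have := card_pos.2 ⟨u, hu⟩
    rw [erase_inter, univ_inter, card_erase_of_mem hu]
    split_ifs <;> norm_num <;> omega
  rw [bernoulliExpect_congr fun H _ => hcompl H, bernoulliExpect_sub, bernoulliExpect_const]
  linarith

theorem reachable_union_of_mem_reachedSet {H H' : Finset (Sym2 V)} {u v a b : V}
    (ha : a ∈ reachedSet ⊤ H {u}) (hb : b ∈ reachedSet ⊤ H {v}) (hab : a ≠ b)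
    (he : s(a, b) ∈ H') : (percSubgraph ⊤ (H ∪ H')).Reachable u v :=
  have hmono := percSubgraph_mono (G := ⊤) (subset_union_left (s₂ := H'))
  (((mem_reachedSet_singleton.1 ha).mono hmono).trans
    (SimpleGraph.Adj.reachable ⟨hab, mem_union_right _ he⟩)).trans
    ((mem_reachedSet_singleton.1 hb).mono hmono).symm

open scoped Classical in
/-- Sprinkling: once the first sample gives `u` and `v` clusters of more than `k` vertices, the
second sample joins them unless it misses all of the at least `k ^ 2` edges between them. -/
theorem mul_bernoulliExpect_le_bernoulliExpect_reachable {β₁ β₂ : ℝ} (hβ₁0 : 0 ≤ β₁)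
    (hβ₁1 : β₁ ≤ 1) (hβ₂0 : 0 ≤ β₂) (hβ₂1 : β₂ ≤ 1) (hβ : 1 - β = (1 - β₁) * (1 - β₂))
    (k : ℕ) (u v : V) :
    (1 - (1 - β₂) ^ (k ^ 2)) * bernoulliExpect β₁ (⊤ : SimpleGraph V).edgeFinset (fun H =>
        (if k < #(reachedSet ⊤ H {u}) then 1 else 0) * if k < #(reachedSet ⊤ H {v}) then 1 else 0)
      ≤ bernoulliExpect β (⊤ : SimpleGraph V).edgeFinset
          (fun H => if (percSubgraph ⊤ H).Reachable u v then 1 else 0) := by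
  set E := (⊤ : SimpleGraph V).edgeFinset
  have hq0 : 0 ≤ (1 - β₂) ^ (k ^ 2) := pow_nonneg (by linarith) _
  have hq1 : (1 - β₂) ^ (k ^ 2) ≤ 1 := pow_le_one₀ (by linarith) (by linarith)
  rw [bernoulliExpect_eq_bernoulliExpect_union hβ, ← bernoulliExpect_const_mul]
  refine bernoulliExpect_mono hβ₁0 hβ₁1 fun H₁ _ => ?_
  by_cases hconn : (percSubgraph ⊤ H₁).Reachable u v
  · calc _ ≤ (1 : ℝ) := by split_ifs <;> linarith
      _ = bernoulliExpect β₂ E (fun _ => 1) := (bernoulliExpect_const _ _).symm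
      _ ≤ _ := bernoulliExpect_mono hβ₂0 hβ₂1 fun H₂ _ => by
          rw [if_pos (hconn.mono (percSubgraph_mono subset_union_left))]
  by_cases hbig : k < #(reachedSet ⊤ H₁ {u}) ∧ k < #(reachedSet ⊤ H₁ {v})
  swap
  · calc _ = (0 : ℝ) := by split_ifs <;> simp_all
      _ ≤ _ := bernoulliExpect_nonneg hβ₂0 hβ₂1 fun _ _ => by split_ifs <;> norm_num
  have hdisj := disjoint_reachedSet_singleton hconn
  set F := (reachedSet ⊤ H₁ {u} ×ˢ reachedSet ⊤ H₁ {v}).image fun p => s(p.1, p.2)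
  have hFE : F ⊆ E := by
    simp only [F, E, subset_iff, mem_image, mem_product, SimpleGraph.mem_edgeFinset]
    rintro _ ⟨⟨a, b⟩, ⟨ha, hb⟩, rfl⟩
    exact fun h => Finset.disjoint_left.1 hdisj ha (h ▸ hb)
  have hF : k ^ 2 ≤ #F := by
    rw [card_image_mk_product hdisj, sq]
    exact Nat.mul_le_mul hbig.1.le hbig.2.le
  calc _ = 1 - (1 - β₂) ^ (k ^ 2) := by rw [if_pos hbig.1, if_pos hbig.2]; ring
    _ ≤ 1 - (1 - β₂) ^ #F := sub_le_sub_left (pow_le_pow_of_le_one (by linarith) (by linarith) hF) 1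
    _ = bernoulliExpect β₂ E (fun H₂ => 1 - if H₂ ∩ F = ∅ then 1 else 0) := by
        rw [bernoulliExpect_sub, bernoulliExpect_const, bernoulliExpect_inter_eq_empty hFE]
    _ ≤ _ := bernoulliExpect_mono hβ₂0 hβ₂1 fun H₂ _ => by
        by_cases hH₂ : H₂ ∩ F = ∅
        · rw [if_pos hH₂, sub_self]
          split_ifs <;> norm_num
        obtain ⟨e, he⟩ := nonempty_iff_ne_empty.2 hH₂
        obtain ⟨he₂, heF⟩ := mem_inter.1 he
        obtain ⟨⟨a, b⟩, hab, rfl⟩ := mem_image.1 heF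
        obtain ⟨ha, hb⟩ := mem_product.1 hab
        rw [if_neg hH₂, if_pos (reachable_union_of_mem_reachedSet ha hb
          (fun h => Finset.disjoint_left.1 hdisj ha (h ▸ hb)) he₂), sub_zero]

theorem expectedFinalSize_eq_bernoulliExpect (G : SimpleGraph V) [Fintype G.edgeSet] (β : ℝ)
    (I : Finset V) :
    expectedFinalSize G β I = bernoulliExpect β G.edgeFinset (fun H => #(reachedSet G H I)) := by
  unfold expectedFinalSize percWeight bernoulliExpect bernoulliWeight
  congr!

theorem monotone_ite_lt_card_reachedSet (k : ℕ) (u : V) :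
    Monotone fun H : Finset (Sym2 V) => if k < #(reachedSet ⊤ H {u}) then (1 : ℝ) else 0 := by
  intro H H' h
  have := card_le_card (reachedSet_mono (G := ⊤) (I := {u}) h)
  dsimp only
  split_ifs <;> first | omega | norm_num

open scoped Classical in
theorem mul_sq_le_bernoulliExpect_reachable {β₁ β₂ : ℝ} (hβ₁0 : 0 ≤ β₁) (hβ₁1 : β₁ ≤ 1)
    (hβ₂0 : 0 ≤ β₂) (hβ₂1 : β₂ ≤ 1) (hβ : 1 - β = (1 - β₁) * (1 - β₂)) (hq0 : 0 ≤ q)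
    (hq1 : q ≤ 1) (hk : k < Fintype.card V)
    (hq : (1 - β₁ * q) ^ (Fintype.card V - 1 - k) ≤ 1 - q) (u v : V) :
    (1 - (1 - β₂) ^ (k ^ 2)) * q ^ 2 ≤ bernoulliExpect β (⊤ : SimpleGraph V).edgeFinset
      (fun H => if (percSubgraph ⊤ H).Reachable u v then 1 else 0) := by
  have hu := le_bernoulliExpect_lt_card_reachedSet hβ₁0 hβ₁1 hq0 hq1 hk hq u
  have hv := le_bernoulliExpect_lt_card_reachedSet hβ₁0 hβ₁1 hq0 hq1 hk hq v
  have hnonneg : ∀ w : V, 0 ≤ fun H : Finset (Sym2 V) =>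
      if k < #(reachedSet ⊤ H {w}) then (1 : ℝ) else 0 := fun w H => by
    dsimp only
    split_ifs <;> norm_num
  refine le_trans ?_ (mul_bernoulliExpect_le_bernoulliExpect_reachable hβ₁0 hβ₁1 hβ₂0 hβ₂1 hβ k
    u v)
  gcongr
  · exact sub_nonneg.2 (pow_le_one₀ (by linarith) (by linarith))
  calc q ^ 2 ≤ _ * _ := by rw [sq]; exact mul_le_mul hu hv hq0 (hq0.trans hu)
    _ ≤ _ := bernoulliExpect_mul_le_of_monotone hβ₁0 hβ₁1 (hnonneg u) (hnonneg v)
          (monotone_ite_lt_card_reachedSet k u) (monotone_ite_lt_card_reachedSet k v)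

theorem card_mul_sq_mul_le_expectedFinalSize {β₁ β₂ : ℝ} (hβ₁0 : 0 ≤ β₁) (hβ₁1 : β₁ ≤ 1)
    (hβ₂0 : 0 ≤ β₂) (hβ₂1 : β₂ ≤ 1) (hβ : 1 - β = (1 - β₁) * (1 - β₂)) (hq0 : 0 ≤ q)
    (hq1 : q ≤ 1) (hk : k < Fintype.card V)
    (hq : (1 - β₁ * q) ^ (Fintype.card V - 1 - k) ≤ 1 - q) {I : Finset V} {u : V} (hu : u ∈ I) :
    Fintype.card V * q ^ 2 * (1 - (1 - β₂) ^ (k ^ 2)) ≤ expectedFinalSize ⊤ β I := by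
  classical
  have hβ0 : 0 ≤ β := by nlinarith
  have hβ1 : β ≤ 1 := by nlinarith
  calc _ = ∑ _v : V, (1 - (1 - β₂) ^ (k ^ 2)) * q ^ 2 := by
        rw [sum_const, card_univ, nsmul_eq_mul]
        ring
    _ ≤ ∑ v, bernoulliExpect β (⊤ : SimpleGraph V).edgeFinset
          (fun H => if (percSubgraph ⊤ H).Reachable u v then 1 else 0) :=
        sum_le_sum fun v _ =>
          mul_sq_le_bernoulliExpect_reachable hβ₁0 hβ₁1 hβ₂0 hβ₂1 hβ hq0 hq1 hk hq u v
    _ = bernoulliExpect β (⊤ : SimpleGraph V).edgeFinset (fun H => #(reachedSet ⊤ H {u})) := by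
        simp_rw [card_reachedSet_singleton_eq_sum, bernoulliExpect_sum]
    _ ≤ expectedFinalSize ⊤ β I := by
        rw [expectedFinalSize_eq_bernoulliExpect]
        refine bernoulliExpect_mono hβ0 hβ1 fun H _ => ?_
        exact_mod_cast card_le_card (reachedSet_subset_reachedSet
          (singleton_subset_iff.2 (subset_reachedSet hu)))

end CompleteGraph

section Asymptotics

open Real Filter

theorem exp_neg_mul_lt_one_sub {c γ q : ℝ} (hγ0 : 0 < γ) (hγ : γ + exp (-γ * c) = 1)
    (hq0 : 0 < q) (hqγ : q < γ) : exp (-(c * q)) < 1 - q := by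
  have hc : -γ * c ≠ 0 := fun h => by rw [h, exp_zero] at hγ; linarith
  have ha : 0 < 1 - q / γ := by rw [sub_pos, div_lt_one hγ0]; exact hqγ
  have h := strictConvexOn_exp.2 (Set.mem_univ 0) (Set.mem_univ (-γ * c)) hc.symm ha
    (div_pos hq0 hγ0) (by ring)
  simp only [smul_eq_mul, mul_zero, zero_add, exp_zero,
    show exp (-γ * c) = 1 - γ by linarith] at h
  rwa [show q / γ * (-γ * c) = -(c * q) by field_simp,
    show (1 - q / γ) * 1 + q / γ * (1 - γ) = 1 - q by field_simp; ring] at h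

theorem exists_exp_neg_le_one_sub {c q : ℝ} (hc : 0 < c) (hq : exp (-(c * q)) < 1 - q) :
    ∃ δ, 0 < δ ∧ δ < 1 / 2 ∧ δ < c ∧ exp (-((c - δ) * (1 - 2 * δ) * q)) ≤ 1 - q := by
  have hcont : ContinuousAt (fun δ : ℝ => exp (-((c - δ) * (1 - 2 * δ) * q))) 0 := by fun_prop
  have hev := (hcont.eventually (gt_mem_nhds (by simpa using hq))).filter_mono
    (nhdsWithin_le_nhds (s := Set.Ioi 0))
  obtain ⟨δ, hδ, hδ0, hδ1⟩ :=
    (hev.and (Ioo_mem_nhdsGT (lt_min (by norm_num : (0 : ℝ) < 1 / 2) hc))).exists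
  exact ⟨δ, hδ0, hδ1.trans_le (min_le_left _ _), hδ1.trans_le (min_le_right _ _), hδ.le⟩

theorem one_sub_pow_le_exp_neg_mul {x : ℝ} (hx : x ≤ 1) (m : ℕ) :
    (1 - x) ^ m ≤ exp (-(x * m)) := by
  rw [show -(x * m) = m * -x by ring, exp_nat_mul]
  exact pow_le_pow_left₀ (by linarith) (one_sub_le_exp_neg x) m

theorem one_sub_mul_pow_le_of_exp_le {c q δ : ℝ} {n k : ℕ} (hq0 : 0 ≤ q) (hq1 : q ≤ 1)
    (hδ0 : 0 ≤ δ) (hδc : δ ≤ c) (hn : c < (n : ℝ) - 1) (hkn : k < n)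
    (hk : (k : ℝ) ≤ 2 * δ * ((n : ℝ) - 1))
    (hδ : exp (-((c - δ) * (1 - 2 * δ) * q)) ≤ 1 - q) :
    (1 - (c - δ) / ((n : ℝ) - 1) * q) ^ (n - 1 - k) ≤ 1 - q := by
  have hn0 : 0 < (n : ℝ) - 1 := by linarith
  set β₁ := (c - δ) / ((n : ℝ) - 1)
  have hβ₁0 : 0 ≤ β₁ := div_nonneg (by linarith) hn0.le
  have hβ₁1 : β₁ ≤ 1 := (div_le_one hn0).2 (by linarith)
  have hm : (1 - 2 * δ) * ((n : ℝ) - 1) ≤ ((n - 1 - k : ℕ) : ℝ) := by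
    rw [Nat.cast_sub (by omega), Nat.cast_sub (by omega)]
    push_cast
    linarith
  refine (one_sub_pow_le_exp_neg_mul (by nlinarith) _).trans (le_trans ?_ hδ)
  rw [exp_le_exp, neg_le_neg_iff]
  calc (c - δ) * (1 - 2 * δ) * q = β₁ * q * ((1 - 2 * δ) * ((n : ℝ) - 1)) := by
        simp only [β₁]
        field_simp
    _ ≤ β₁ * q * ((n - 1 - k : ℕ) : ℝ) := by gcongr

theorem one_sub_div_pow_sq_le {c δ : ℝ} {n k : ℕ} (hδ0 : 0 < δ) (hδc : δ ≤ c)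
    (hn : c < (n : ℝ) - 1) (hk : δ * n ≤ k) :
    (1 - δ / ((n : ℝ) - 1 - c + δ)) ^ (k ^ 2) ≤ exp (-(δ ^ 3 * n)) := by
  have hd : 0 < (n : ℝ) - 1 - c + δ := by linarith
  have hβ₂ : δ / n ≤ δ / ((n : ℝ) - 1 - c + δ) :=
    div_le_div_of_nonneg_left hδ0.le hd (by linarith)
  refine (one_sub_pow_le_exp_neg_mul (div_le_one_of_le₀ (by linarith) hd.le) _).trans ?_
  rw [exp_le_exp, neg_le_neg_iff]
  calc δ ^ 3 * n = δ / n * (δ * n) ^ 2 := by field_simp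
    _ ≤ δ / ((n : ℝ) - 1 - c + δ) * ((k ^ 2 : ℕ) : ℝ) := by push_cast; gcongr

theorem eventually_exists_sprinkling_parameters {c q δ η : ℝ} (hq0 : 0 ≤ q) (hq1 : q ≤ 1)
    (hδ0 : 0 < δ) (hδ2 : δ < 1 / 2) (hδc : δ < c)
    (hδ : exp (-((c - δ) * (1 - 2 * δ) * q)) ≤ 1 - q) (hη : 0 < η) :
    ∀ᶠ n : ℕ in atTop, ∃ β₁ β₂ : ℝ, ∃ k : ℕ, 0 ≤ β₁ ∧ β₁ ≤ 1 ∧ 0 ≤ β₂ ∧ β₂ ≤ 1 ∧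
      1 - c / ((n : ℝ) - 1) = (1 - β₁) * (1 - β₂) ∧ k < n ∧
      (1 - β₁ * q) ^ (n - 1 - k) ≤ 1 - q ∧ (1 - β₂) ^ (k ^ 2) ≤ η := by
  have hexp : ∀ᶠ n : ℕ in atTop, exp (-(δ ^ 3 * n)) ≤ η :=
    (tendsto_exp_neg_atTop_nhds_zero.comp (tendsto_natCast_atTop_atTop.const_mul_atTop
      (by positivity))).eventually (ge_mem_nhds hη)
  filter_upwards [hexp, eventually_gt_atTop ⌈c + 2 + 1 / δ⌉₊] with n hexp hn
  replace hn : c + 2 + 1 / δ < n := Nat.lt_of_ceil_lt hn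
  have hδn : 1 + 2 * δ < δ * n := by
    have := mul_lt_mul_of_pos_left hn hδ0
    rw [mul_add, mul_one_div_cancel hδ0.ne'] at this
    nlinarith
  have hn1 : c < (n : ℝ) - 1 := by nlinarith [one_div_pos.2 hδ0]
  have hd : 0 < (n : ℝ) - 1 - c + δ := by linarith
  have hk0 : δ * n ≤ ⌈δ * n⌉₊ := Nat.le_ceil _
  have hk1 : (⌈δ * n⌉₊ : ℝ) < δ * n + 1 := Nat.ceil_lt_add_one (by positivity)
  have hkn : ⌈δ * n⌉₊ < n := by exact_mod_cast (show (⌈δ * n⌉₊ : ℝ) < n by nlinarith)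
  refine ⟨(c - δ) / ((n : ℝ) - 1), δ / ((n : ℝ) - 1 - c + δ), ⌈δ * n⌉₊,
    div_nonneg (by linarith) (by linarith), (div_le_one (by linarith)).2 (by linarith),
    div_nonneg hδ0.le hd.le, (div_le_one hd).2 (by linarith), ?_, hkn,
    one_sub_mul_pow_le_of_exp_le hq0 hq1 hδ0.le hδc.le hn1 hkn (by linarith) hδ,
    (one_sub_div_pow_sq_le hδ0 hδc.le hn1 hk0).trans hexp⟩
  field_simp [hd.ne', show (n : ℝ) - 1 ≠ 0 by linarith]
  ring

end Asymptotics

theorem complete_graph_large_epidemic_general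
    (c : ℝ) (γ : ℝ) (hγ0 : 0 < γ) (hγeq : γ + Real.exp (-γ * c) = 1)
    (ε : ℝ) (hε : 0 < ε) :
    ∃ N : ℕ, ∀ n ≥ N, ∀ I : Finset (Fin n), I.Nonempty →
      (γ ^ 2 - ε) * (n : ℝ)
        ≤ expectedFinalSize (⊤ : SimpleGraph (Fin n)) (c / ((n : ℝ) - 1)) I := by
  have hγ1 : γ < 1 := by linarith [Real.exp_pos (-γ * c)]
  have hc : 0 < c := by
    by_contra! h
    linarith [Real.one_le_exp (show 0 ≤ -γ * c by nlinarith)]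
  set q := γ - min (γ / 2) (ε / 4)
  have hd := lt_min (half_pos hγ0) (by positivity : 0 < ε / 4)
  have hq0 : 0 < q := by linarith [min_le_left (γ / 2) (ε / 4)]
  have hq2 : γ ^ 2 - ε / 2 ≤ q ^ 2 := by nlinarith [min_le_right (γ / 2) (ε / 4)]
  obtain ⟨δ, hδ0, hδ2, hδc, hδ⟩ :=
    exists_exp_neg_le_one_sub hc (exp_neg_mul_lt_one_sub hγ0 hγeq hq0 (by linarith))
  obtain ⟨N, hN⟩ := Filter.eventually_atTop.1 (eventually_exists_sprinkling_parameters hq0.le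
    (by linarith) hδ0 hδ2 hδc hδ (half_pos hε))
  refine ⟨N, fun n hn I ⟨u, hu⟩ => ?_⟩
  obtain ⟨β₁, β₂, k, hβ₁0, hβ₁1, hβ₂0, hβ₂1, hβ, hk, hexplore, hsprinkle⟩ := hN n hn
  have key := card_mul_sq_mul_le_expectedFinalSize (V := Fin n) hβ₁0 hβ₁1 hβ₂0 hβ₂1 hβ hq0.le
    (by linarith) (by simpa using hk) (by simpa using hexplore) hu
  rw [Fintype.card_fin] at key
  have he : 0 ≤ (1 - β₂) ^ (k ^ 2) := pow_nonneg (by linarith) _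
  have hq : γ ^ 2 - ε ≤ q ^ 2 * (1 - (1 - β₂) ^ (k ^ 2)) := by
    nlinarith [mul_le_of_le_one_left he (show q ^ 2 ≤ 1 by nlinarith)]
  nlinarith [Nat.cast_nonneg (α := ℝ) n]

/-- Reed–Frost epidemic on the complete graph `Kₙ` with `β = c/(n-1)`, `c > 1`: if
`γ ∈ (0,1)` solves `γ + e^{-γc} = 1`, then for every `ε > 0` and all large enough `n`,
the expected final size from any nonempty initial set is at least `(γ² - ε) n`. -/
theorem complete_graph_large_epidemic
    (c : ℝ) (hc : 1 < c) (γ : ℝ) (hγ0 : 0 < γ) (hγeq : γ + Real.exp (-γ * c) = 1)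
    (ε : ℝ) (hε : 0 < ε) :
    ∃ N : ℕ, ∀ n ≥ N, ∀ I : Finset (Fin n), I.Nonempty →
      (γ ^ 2 - ε) * (n : ℝ)
        ≤ expectedFinalSize (⊤ : SimpleGraph (Fin n)) (c / ((n : ℝ) - 1)) I :=
  complete_graph_large_epidemic_general c γ hγ0 hγeq ε hε

end VirusSpread
end
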